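/- For any pair (a, x) of coprime integers with 1 ≤ a ≤ x, the polynomial (x, a)_q equals q^{deg (x,a)_q} · (a, x)_{q^{-1}}; that is, (x, a)_q is the reversed (reciprocal) polynomial of (a, x)_q. -/

import Mathlib

open Polynomial

/-- The `q`-integer `[c]_q = 1 + q + ⋯ + q^{c-1}` as a polynomial in `ℤ[q]`. -/
noncomputable def qInt (c : ℕ) : Polynomial ℤ := ∑ i ∈ Finset.range c, X ^ i

/-- The polynomial `(a, b)_q ∈ ℤ[q]` associated to a pair of coprime positive
integers: `(1, n)_q = (n, 1)_q = [n+1]_q`; if `a < b` then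
`(a,b)_q = (a-r, r)_q + q·(a, b-a)_q` with `r = b % a`; if `a > b` then
`(a,b)_q = (a-b, b)_q + q^⌈a/b⌉·(r, b-r)_q` with `r = a % b`.
(Values on non-coprime or zero inputs are junk.) -/
noncomputable def W : ℕ → ℕ → Polynomial ℤ
  | 1, b => qInt (b + 1)
  | a, 1 => qInt (a + 1)
  | 0, _ => 0
  | _, 0 => 0
  | a + 2, b + 2 =>
    if a < b then
      W (a + 2 - (b + 2) % (a + 2)) ((b + 2) % (a + 2)) + X * W (a + 2) (b - a)
    else
      W (a - b) (b + 2) +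
        X ^ ((a + 2 + (b + 2) - 1) / (b + 2)) *
          W ((a + 2) % (b + 2)) (b + 2 - (a + 2) % (b + 2))
  termination_by a b => a + b
  decreasing_by
  · have := Nat.mod_lt (b + 2) (show 0 < a + 2 by omega); omega
  · omega
  · omega
  · have := Nat.mod_lt (a + 2) (show 0 < b + 2 by omega); omega

/-- The sequence of digits of the negative continued fraction expansion
`x/a = [c₁, …, c_l]⁻` (each `cᵢ = ⌈·⌉` of the current fraction). By convention
`ncfDigits x 0 = []` (for `1/0 = ∞`) and `ncfDigits x 1 = [x]`. -/
def ncfDigits : ℕ → ℕ → List ℕ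
  | _, 0 => []
  | x, 1 => [x]
  | x, a + 2 =>
      (x + (a + 2) - 1) / (a + 2) ::
        ncfDigits (a + 2) ((x + (a + 2) - 1) / (a + 2) * (a + 2) - x)
  termination_by x a => a
  decreasing_by
    have := Nat.div_mul_le_self (x + (a + 2) - 1) (a + 2); omega

/-- The (coprime) numerator and denominator of the Morier-Genoud–Ovsienko
`q`-deformation of the negative continued fraction `[c₁, …, c_l]⁻`, computed by
the continuant recursion `(N, D) ↦ ([c]_q·N - q^{c-1}·D, N)`, with `(1, 0)` for
the empty list. -/
noncomputable def qCF : List ℕ → Polynomial ℤ × Polynomial ℤ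
  | [] => (1, 0)
  | c :: rest =>
      let p := qCF rest
      (qInt c * p.1 - X ^ (c - 1) * p.2, p.1)

/-- Numerator `N_q(x/a)` of the Morier-Genoud–Ovsienko `q`-rational `[x/a]_q`. -/
noncomputable def Nq (x a : ℕ) : Polynomial ℤ := (qCF (ncfDigits x a)).1

/-- Denominator `D_q(x/a)` of the Morier-Genoud–Ovsienko `q`-rational `[x/a]_q`. -/
noncomputable def Dq (x a : ℕ) : Polynomial ℤ := (qCF (ncfDigits x a)).2

/-- The normalized Jones polynomial `J_{x/a}(q) = q·N_q(x/a) + (1-q)·D_q(x/a)`. -/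
noncomputable def Jq (x a : ℕ) : Polynomial ℤ := X * Nq x a + (1 - X) * Dq x a

/-! Write `d(a, b)` for the degree of `(a, b)_q`, given by the same subtractive Euclid recursion
(`degW`). For `a < b` and `r = b % a` one has `d(a, b) = 1 + d(a, b - a) = d(a - r, r) + ⌈b/a⌉`,
so reflecting `(a, b)_q = (a - r, r)_q + q·(a, b - a)_q` at `d(a, b)` gives, by induction,
`q^⌈b/a⌉·(r, a - r)_q + (b - a, a)_q`, which is the recursion defining `(b, a)_q`; the case
`a > b` follows because reflection is an involution. Hence `(b, a)_q = q^{d(a,b)}·(a, b)_{q⁻¹}`.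
Since `(b, a)_q` has constant term `1`, the coefficient of `q^{d(a,b)}` in `(a, b)_q` is `1`, so
`d(a, b)` is its actual degree and the reflection is the reversal. -/

lemma W_one_right {a : ℕ} (ha : 1 ≤ a) : W a 1 = qInt (a + 1) := by
  rcases a with _ | _ | a
  · omega
  · exact W.eq_1 1
  · exact W.eq_2 _ (by omega)

lemma W_of_lt {a b : ℕ} (ha : 2 ≤ a) (hab : a < b) :
    W a b = W (a - b % a) (b % a) + X * W a (b - a) := by
  obtain ⟨a, rfl⟩ := Nat.exists_eq_add_of_le' ha
  obtain ⟨b, rfl⟩ : ∃ b', b = b' + 2 := ⟨b - 2, by omega⟩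
  rw [W.eq_5, if_pos (by omega), show b + 2 - (a + 2) = b - a by omega]

lemma W_of_gt {a b : ℕ} (hb : 2 ≤ b) (hab : b < a) :
    W a b = W (a - b) b + X ^ ((a + b - 1) / b) * W (a % b) (b - a % b) := by
  obtain ⟨b, rfl⟩ := Nat.exists_eq_add_of_le' hb
  obtain ⟨a, rfl⟩ : ∃ a', a = a' + 2 := ⟨a - 2, by omega⟩
  rw [W.eq_5, if_neg (by omega), show a + 2 - (b + 2) = a - b by omega]

lemma coeff_qInt (n i : ℕ) : (qInt n).coeff i = if i < n then 1 else 0 := by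
  simp [qInt, finsetSum_coeff, coeff_X_pow]

lemma natDegree_qInt_succ_le (n : ℕ) : (qInt (n + 1)).natDegree ≤ n :=
  natDegree_le_iff_coeff_eq_zero.mpr fun i hi => by rw [coeff_qInt, if_neg (by omega)]

lemma reflect_qInt_succ (n : ℕ) : reflect n (qInt (n + 1)) = qInt (n + 1) := by
  ext i
  rcases le_or_gt i n with h | h
  · simp [coeff_qInt, revAt_le h, Nat.lt_succ_of_le h]
  · rw [coeff_reflect, revAt_eq_self_of_lt h]

lemma Nat.Coprime.mod_pos {a b : ℕ} (hco : Nat.Coprime a b) (ha : 2 ≤ a) : 0 < b % a := by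
  refine Nat.pos_of_ne_zero fun h => ?_
  have : Nat.gcd a b = a := by rw [Nat.gcd_rec, h, Nat.gcd_zero_left]
  rw [hco] at this
  omega

theorem coprime_induction {P : ℕ → ℕ → Prop}
    (one_left : ∀ b, 1 ≤ b → P 1 b) (one_right : ∀ a, 1 ≤ a → P a 1)
    (of_lt : ∀ a b, 2 ≤ a → a < b → Nat.Coprime a b →
      P (a - b % a) (b % a) → P a (b - a) → P a b)
    (of_gt : ∀ a b, 2 ≤ b → b < a → Nat.Coprime a b →
      P (a - b) b → P (a % b) (b - a % b) → P a b)
    {a b : ℕ} (hco : Nat.Coprime a b) (ha : 1 ≤ a) (hb : 1 ≤ b) : P a b := by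
  induction h : a + b using Nat.strong_induction_on generalizing a b with
  | _ n ih =>
  subst h
  obtain rfl | ha := eq_or_lt_of_le ha
  · exact one_left b hb
  obtain rfl | hb := eq_or_lt_of_le hb
  · exact one_right a ha.le
  rcases lt_trichotomy a b with hab | rfl | hab
  · have hr := hco.mod_pos ha
    have hcor : Nat.Coprime (b % a) a := by rwa [Nat.Coprime, ← Nat.gcd_rec]
    have hr' := Nat.mod_lt b (by omega : 0 < a)
    exact of_lt a b ha hab hco
      (ih _ (by omega) ((Nat.coprime_sub_self_left hr'.le).mpr hcor.symm) (by omega) hr rfl)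
      (ih _ (by omega) ((Nat.coprime_sub_self_right hab.le).mpr hco) (by omega) (by omega) rfl)
  · rw [Nat.coprime_self] at hco
    omega
  · have hr := hco.symm.mod_pos hb
    have hcor : Nat.Coprime (a % b) b := by rwa [Nat.Coprime, ← Nat.gcd_rec, Nat.gcd_comm]
    have hr' := Nat.mod_lt a (by omega : 0 < b)
    exact of_gt a b hb hab hco
      (ih _ (by omega) ((Nat.coprime_sub_self_left hab.le).mpr hco) (by omega) (by omega) rfl)
      (ih _ (by omega) ((Nat.coprime_sub_self_right hr'.le).mpr hcor) hr (by omega) rfl)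

theorem coprime_induction_of_symm {P : ℕ → ℕ → Prop} (symm : ∀ a b, P a b → P b a)
    (one_left : ∀ b, 1 ≤ b → P 1 b)
    (of_lt : ∀ a b, 2 ≤ a → a < b → Nat.Coprime a b →
      P (a - b % a) (b % a) → P a (b - a) → P a b)
    {a b : ℕ} (hco : Nat.Coprime a b) (ha : 1 ≤ a) (hb : 1 ≤ b) : P a b :=
  coprime_induction one_left (fun a ha => symm _ _ (one_left a ha)) of_lt
    (fun a b hb hab hco h₁ h₂ =>
      symm _ _ (of_lt b a hb hab hco.symm (symm _ _ h₂) (symm _ _ h₁)))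
    hco ha hb

lemma coeff_W_zero {a b : ℕ} (hco : Nat.Coprime a b) (ha : 1 ≤ a) (hb : 1 ≤ b) :
    (W a b).coeff 0 = 1 := by
  refine coprime_induction (P := fun a b => (W a b).coeff 0 = 1) (fun b _ => ?_)
    (fun a ha => ?_) (fun a b ha hab _ ih _ => ?_) (fun a b hb hab _ ih _ => ?_) hco ha hb
  · simp [W.eq_1, coeff_qInt]
  · simp [W_one_right ha, coeff_qInt]
  · simp [W_of_lt ha hab, ih]
  · have hc : (a + b - 1) / b ≠ 0 := (Nat.div_pos (by omega) (by omega)).ne'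
    simp [W_of_gt hb hab, ih, hc.symm]

-- The base value `a + b - 1` (rather than `b` for `a = 1`) keeps `degW` symmetric at `0` too.
def degW (a b : ℕ) : ℕ :=
  if a ≤ 1 ∨ b ≤ 1 then a + b - 1
  else if a < b then 1 + degW a (b - a) else 1 + degW (a - b) b
termination_by a + b

lemma degW_of_le_one {a b : ℕ} (h : a ≤ 1 ∨ b ≤ 1) : degW a b = a + b - 1 := by
  rw [degW, if_pos h]

lemma degW_of_lt {a b : ℕ} (ha : 1 ≤ a) (hab : a < b) : degW a b = 1 + degW a (b - a) := by
  by_cases h : a ≤ 1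
  · rw [degW_of_le_one (.inl h), degW_of_le_one (.inl h)]
    omega
  · rw [degW, if_neg (by omega), if_pos hab]

lemma degW_of_gt {a b : ℕ} (hb : 1 ≤ b) (hab : b < a) : degW a b = 1 + degW (a - b) b := by
  by_cases h : b ≤ 1
  · rw [degW_of_le_one (.inr h), degW_of_le_one (.inr h)]
    omega
  · rw [degW, if_neg (by omega), if_neg (by omega)]

lemma degW_comm (a b : ℕ) : degW a b = degW b a := by
  induction h : a + b using Nat.strong_induction_on generalizing a b with
  | _ n ih =>
  subst h
  by_cases h : a ≤ 1 ∨ b ≤ 1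
  · rw [degW_of_le_one h, degW_of_le_one h.symm, add_comm]
  rcases lt_trichotomy a b with hab | rfl | hab
  · rw [degW_of_lt (by omega) hab, degW_of_gt (by omega) hab, ih _ (by omega) _ _ rfl]
  · rfl
  · rw [degW_of_gt (by omega) hab, degW_of_lt (by omega) hab, ih _ (by omega) _ _ rfl]

lemma degW_add_mul {a b : ℕ} (ha : 1 ≤ a) (hb : 1 ≤ b) (k : ℕ) :
    degW a (b + k * a) = k + degW a b := by
  induction k with
  | zero => simp
  | succ k ih =>
    rw [degW_of_lt ha (by nlinarith), show b + (k + 1) * a - a = b + k * a by ring_nf; omega, ih]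
    ring

lemma add_sub_one_div_eq_div_add_one {a b : ℕ} (ha : 0 < a) (hr : 0 < b % a) :
    (b + a - 1) / a = b / a + 1 := by
  have hb : b + a - 1 = (b % a - 1) + a * (b / a + 1) := by
    have := Nat.div_add_mod b a
    rw [mul_add]
    omega
  have hlt : b % a - 1 < a := by have := Nat.mod_lt b ha; omega
  rw [hb, Nat.add_mul_div_left _ _ ha, Nat.div_eq_of_lt hlt, zero_add]

lemma degW_eq_degW_mod_add {a b : ℕ} (ha : 0 < a) (hr : 0 < b % a) :
    degW a b = degW (a - b % a) (b % a) + (b + a - 1) / a := by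
  conv_lhs => rw [← Nat.mod_add_div' b a, degW_add_mul ha hr, degW_of_gt hr (Nat.mod_lt b ha)]
  rw [add_sub_one_div_eq_div_add_one ha hr]
  ring

lemma reflect_add_eq_mul_X_pow {R : Type*} [Semiring R] {p : R[X]} {N : ℕ} (h : p.natDegree ≤ N)
    (c : ℕ) : reflect (N + c) p = reflect N p * X ^ c := by
  simpa [reflect_one] using reflect_mul p 1 h (natDegree_one.trans_le c.zero_le)

lemma natDegree_W_le_and_W_swap_eq_reflect {a b : ℕ} (hco : Nat.Coprime a b) (ha : 1 ≤ a)
    (hb : 1 ≤ b) :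
    (W a b).natDegree ≤ degW a b ∧ W b a = reflect (degW a b) (W a b) := by
  refine coprime_induction_of_symm
    (P := fun a b => (W a b).natDegree ≤ degW a b ∧ W b a = reflect (degW a b) (W a b))
    (fun a b ⟨hdeg, hswap⟩ => ⟨?_, ?_⟩) (fun b hb => ?_)
    (fun a b ha hab hco ⟨hdeg₁, hswap₁⟩ ⟨hdeg₂, hswap₂⟩ => ?_) hco ha hb
  · rw [degW_comm, hswap]
    exact natDegree_reflect_le.trans (max_le le_rfl hdeg)
  · rw [degW_comm, hswap, reflect_reflect]
  · rw [W.eq_1, W_one_right hb, degW_of_le_one (.inl le_rfl), Nat.add_sub_cancel_left]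
    exact ⟨natDegree_qInt_succ_le b, (reflect_qInt_succ b).symm⟩
  · have hr := hco.mod_pos ha
    have hd₁ := degW_eq_degW_mod_add (by omega) hr
    have hd₂ := degW_of_lt (by omega) hab
    refine ⟨?_, ?_⟩
    · rw [W_of_lt ha hab]
      refine (natDegree_add_le _ _).trans (max_le (hdeg₁.trans (hd₁ ▸ le_self_add)) ?_)
      exact natDegree_mul_le.trans (hd₂ ▸ add_le_add natDegree_X_le hdeg₂)
    · have e₁ : reflect (degW a b) (W (a - b % a) (b % a)) =
          X ^ ((b + a - 1) / a) * W (b % a) (a - b % a) := by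
        rw [hd₁, reflect_add_eq_mul_X_pow hdeg₁, ← hswap₁, mul_comm]
      have e₂ : reflect (degW a b) (X * W a (b - a)) = W (b - a) a := by
        rw [hd₂, reflect_mul _ _ natDegree_X_le hdeg₂, reflect_one_X, one_mul, hswap₂]
      rw [W_of_lt ha hab, reflect_add, e₁, e₂, W_of_gt ha hab, add_comm b a, add_comm]

/-- For coprime `1 ≤ a ≤ x`, the polynomial `(x, a)_q` is the reversal
`q^{deg (x,a)_q}·(a,x)_{q⁻¹}` of `(a, x)_q`. -/
theorem W_reverse (a x : ℕ) (hco : Nat.Coprime a x) (ha : 1 ≤ a) (hax : a ≤ x) :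
    W x a = (W a x).reverse := by
  obtain ⟨hdeg, hswap⟩ := natDegree_W_le_and_W_swap_eq_reflect hco ha (ha.trans hax)
  have hlead : (W a x).coeff (degW a x) = 1 := by
    simpa [hswap] using coeff_W_zero hco.symm (ha.trans hax) ha
  have hnatDegree : (W a x).natDegree = degW a x :=
    hdeg.antisymm (le_natDegree_of_ne_zero (by simp [hlead]))
  rw [reverse, hnatDegree, hswap]
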